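/- At β = 0, W'_0(a-) = W'_0(a+) = ((ρ₂⁻ - ρ₁⁺)/(ρ₂⁻ - ρ₁⁻))(ρ₂⁻e^{-ρ₁⁻a} - ρ₁⁻e^{-ρ₂⁻a}). Moreover, since W'_β(a-) increases in β and W'_β(a+) decreases in β on (-1,1), it follows that W'_β(a-) < W'_β(a+) iff β ∈ (-1,0) and W'_β(a+) < W'_β(a-) iff β ∈ (0,1). -/

import Mathlib

/-!
The coefficients `c₁ β`, `c₂ β` depend on `β` only through the odds ratio `t = (1 + β) / (1 - β)`,
which increases from `0` to `∞` on `(-1, 1)`, and with `k = (ρ₂⁻ e^{-ρ₁⁻a} - ρ₁⁻ e^{-ρ₂⁻a}) / (ρ₂⁻ - ρ₁⁻) > 0`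
the two one-sided derivatives collapse to
`W'_β(a-) = (ρ₂⁻ - t ρ₁⁺) k` and `W'_β(a+) = (ρ₂⁻ / t - ρ₁⁺) k`.
Since `ρ₁^± < 0 < ρ₂^±`, the first is strictly increasing and the second strictly decreasing in `t`;
they agree at `t = 1`, i.e. `β = 0`, so the sign of their difference is the sign of `β`.
-/

open Set

theorem StrictMonoOn.lt_iff_lt_of_strictAntiOn {α β : Type*} [LinearOrder α] [Preorder β]
    {f g : α → β} {s : Set α} {x₀ x : α} (hf : StrictMonoOn f s) (hg : StrictAntiOn g s)
    (hx₀ : x₀ ∈ s) (hfg : f x₀ = g x₀) (hx : x ∈ s) : f x < g x ↔ x < x₀ := by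
  refine ⟨fun h => lt_of_not_ge fun hle => ?_, fun h => ?_⟩
  · have hgf : g x ≤ f x :=
      calc g x ≤ g x₀ := hg.antitoneOn hx₀ hx hle
        _ = f x₀ := hfg.symm
        _ ≤ f x := hf.monotoneOn hx₀ hx hle
    exact (h.trans_le hgf).false
  · calc f x < f x₀ := hf hx hx₀ h
      _ = g x₀ := hfg
      _ < g x := hg hx hx₀ h

theorem StrictAntiOn.lt_iff_lt_of_strictMonoOn {α β : Type*} [LinearOrder α] [Preorder β]
    {f g : α → β} {s : Set α} {x₀ x : α} (hg : StrictAntiOn g s) (hf : StrictMonoOn f s)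
    (hx₀ : x₀ ∈ s) (hgf : g x₀ = f x₀) (hx : x ∈ s) : g x < f x ↔ x₀ < x := by
  refine ⟨fun h => lt_of_not_ge fun hle => ?_, fun h => ?_⟩
  · have hfg : f x ≤ g x :=
      calc f x ≤ f x₀ := hf.monotoneOn hx hx₀ hle
        _ = g x₀ := hgf.symm
        _ ≤ g x := hg.antitoneOn hx hx₀ hle
    exact (h.trans_le hfg).false
  · calc g x < g x₀ := hg hx₀ hx h
      _ = f x₀ := hgf
      _ < f x := hf hx₀ hx h

theorem neg_add_sqrt_sq_add_pos {μ q : ℝ} (hq : 0 < q) : 0 < -μ + √(μ ^ 2 + 2 * q) := by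
  have : |μ| < √(μ ^ 2 + 2 * q) := by
    rw [← Real.sqrt_sq_eq_abs]
    exact Real.sqrt_lt_sqrt (sq_nonneg μ) (by linarith)
  linarith [le_abs_self μ]

theorem neg_add_sqrt_sq_add_neg {μ q : ℝ} (hq : 0 < q) : -(μ + √(μ ^ 2 + 2 * q)) < 0 := by
  have := neg_add_sqrt_sq_add_pos (μ := -μ) hq
  rw [neg_sq, neg_neg] at this
  linarith

noncomputable def oddsRatio (β : ℝ) : ℝ := (1 + β) / (1 - β)

@[simp] theorem oddsRatio_zero : oddsRatio 0 = 1 := by simp [oddsRatio]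

theorem oddsRatio_pos {β : ℝ} (hβ : β ∈ Ioo (-1) 1) : 0 < oddsRatio β :=
  div_pos (by linarith [hβ.1]) (by linarith [hβ.2])

theorem strictMonoOn_oddsRatio : StrictMonoOn oddsRatio (Ioo (-1) 1) := by
  intro x hx y hy hxy
  rw [oddsRatio, oddsRatio, div_lt_div_iff₀ (by linarith [hx.2]) (by linarith [hy.2])]
  nlinarith

theorem div_one_sub_mul_eq_oddsRatio {β : ℝ} (hβ : β ≠ 1) (x y d : ℝ) :
    ((1 + β) * x - (1 - β) * y) / ((1 - β) * d) = (oddsRatio β * x - y) / d := by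
  have h : 1 - β ≠ 0 := sub_ne_zero.mpr hβ.symm
  rw [← mul_div_mul_left _ d h, oddsRatio]
  congr 1
  field_simp

theorem div_one_add_mul_eq_oddsRatio {β : ℝ} (hβ : β ≠ 1) (x y d : ℝ) :
    ((1 + β) * x - (1 - β) * y) / ((1 + β) * d) = (oddsRatio β * x - y) / (oddsRatio β * d) := by
  have h : 1 - β ≠ 0 := sub_ne_zero.mpr hβ.symm
  rw [← mul_div_mul_left _ (oddsRatio β * d) h, oddsRatio]
  congr 1 <;> field_simp

theorem strictMonoOn_sub_oddsRatio_mul {b r k : ℝ} (hr : r < 0) (hk : 0 < k) :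
    StrictMonoOn (fun β => (b - oddsRatio β * r) * k) (Ioo (-1) 1) := by
  intro x hx y hy hxy
  have := strictMonoOn_oddsRatio hx hy hxy
  dsimp only
  gcongr ?_ * k
  nlinarith

theorem strictAntiOn_div_oddsRatio_sub_mul {b r k : ℝ} (hb : 0 < b) (hk : 0 < k) :
    StrictAntiOn (fun β => (b / oddsRatio β - r) * k) (Ioo (-1) 1) := by
  intro x hx y hy hxy
  have := strictMonoOn_oddsRatio hx hy hxy
  have := oddsRatio_pos hx
  dsimp only
  gcongr

theorem W_deriv_right_eq {t ρ1m ρ2m ρ1p ρ2p e1 e2 c₁ c₂ : ℝ} (ht : t ≠ 0)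
    (hm : ρ2m - ρ1m ≠ 0) (hp : ρ2p - ρ1p ≠ 0) (hc₁ : c₁ = (t * ρ1p - ρ1m) / (ρ2m - ρ1m))
    (hc₂ : c₂ = (t * ρ2p - ρ2m) / (t * (ρ2p - ρ1p))) :
    ρ2p * (c₁ * e2 + (1 - c₁) * e1) * (1 - c₂) - ρ1p * ((1 - c₁ * c₂) * e2 - c₂ * (1 - c₁) * e1)
      = (ρ2m / t - ρ1p) * ((ρ2m * e1 - ρ1m * e2) / (ρ2m - ρ1m)) := by
  subst hc₁ hc₂
  field_simp
  ring

theorem W_deriv_at_a_comparison_general (q a μp μm : ℝ) (hq : 0 < q)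
    (ρ1m ρ2m ρ1p ρ2p : ℝ)
    (hρ1m : ρ1m = -(μm + Real.sqrt (μm^2 + 2*q)))
    (hρ2m : ρ2m = -μm + Real.sqrt (μm^2 + 2*q))
    (hρ1p : ρ1p = -(μp + Real.sqrt (μp^2 + 2*q)))
    (hρ2p : ρ2p = -μp + Real.sqrt (μp^2 + 2*q))
    (c₁ c₂ Wam Wap : ℝ → ℝ)
    (hc₁ : ∀ β, c₁ β = ((1+β)*ρ1p - (1-β)*ρ1m) / ((1-β)*(ρ2m - ρ1m)))
    (hc₂ : ∀ β, c₂ β = ((1+β)*ρ2p - (1-β)*ρ2m) / ((1+β)*(ρ2p - ρ1p)))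
    (hWam : ∀ β, Wam β = (1 - c₁ β) * (ρ2m * Real.exp (-ρ1m*a) - ρ1m * Real.exp (-ρ2m*a)))
    (hWap : ∀ β, Wap β =
      ρ2p * (c₁ β * Real.exp (-ρ2m*a) + (1 - c₁ β) * Real.exp (-ρ1m*a)) * (1 - c₂ β)
      - ρ1p * ((1 - c₁ β * c₂ β) * Real.exp (-ρ2m*a)
          - c₂ β * (1 - c₁ β) * Real.exp (-ρ1m*a))) :
    Wam 0 = Wap 0 ∧
    Wam 0 = (ρ2m - ρ1p) / (ρ2m - ρ1m) *
      (ρ2m * Real.exp (-ρ1m*a) - ρ1m * Real.exp (-ρ2m*a)) ∧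
    StrictMonoOn Wam (Set.Ioo (-1 : ℝ) 1) ∧
    StrictAntiOn Wap (Set.Ioo (-1 : ℝ) 1) ∧
    (∀ β ∈ Set.Ioo (-1 : ℝ) 1, Wam β < Wap β ↔ β ∈ Set.Ioo (-1 : ℝ) 0) ∧
    (∀ β ∈ Set.Ioo (-1 : ℝ) 1, Wap β < Wam β ↔ β ∈ Set.Ioo (0 : ℝ) 1) := by
  have h1m : ρ1m < 0 := hρ1m ▸ neg_add_sqrt_sq_add_neg hq
  have h2m : 0 < ρ2m := hρ2m ▸ neg_add_sqrt_sq_add_pos hq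
  have h1p : ρ1p < 0 := hρ1p ▸ neg_add_sqrt_sq_add_neg hq
  have h2p : 0 < ρ2p := hρ2p ▸ neg_add_sqrt_sq_add_pos hq
  set k := (ρ2m * Real.exp (-ρ1m*a) - ρ1m * Real.exp (-ρ2m*a)) / (ρ2m - ρ1m)
  have hk : 0 < k := div_pos (by nlinarith [Real.exp_pos (-ρ1m*a), Real.exp_pos (-ρ2m*a)])
    (by linarith)
  have hc₁' : ∀ β ∈ Ioo (-1 : ℝ) 1, c₁ β = (oddsRatio β * ρ1p - ρ1m) / (ρ2m - ρ1m) :=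
    fun β hβ => (hc₁ β).trans (div_one_sub_mul_eq_oddsRatio hβ.2.ne _ _ _)
  have hWam' : EqOn (fun β => (ρ2m - oddsRatio β * ρ1p) * k) Wam (Ioo (-1) 1) := by
    intro β hβ
    rw [hWam, hc₁' β hβ]
    simp only [k]
    field_simp [(by linarith : ρ2m - ρ1m ≠ 0)]
    ring
  have hWap' : EqOn (fun β => (ρ2m / oddsRatio β - ρ1p) * k) Wap (Ioo (-1) 1) := fun β hβ =>
    ((hWap β).trans <| W_deriv_right_eq (oddsRatio_pos hβ).ne' (by linarith)
      (by linarith) (hc₁' β hβ) ((hc₂ β).trans (div_one_add_mul_eq_oddsRatio hβ.2.ne _ _ _))).symm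
  have hmono := (strictMonoOn_sub_oddsRatio_mul h1p hk).congr hWam'
  have hanti := (strictAntiOn_div_oddsRatio_sub_mul h2m hk).congr hWap'
  have h0 : (0 : ℝ) ∈ Ioo (-1) 1 := by norm_num
  have hWam0 : Wam 0 = (ρ2m - ρ1p) * k := by simp [← hWam' h0]
  have heq : Wam 0 = Wap 0 := by rw [hWam0, ← hWap' h0]; simp
  refine ⟨heq, by rw [hWam0]; ring, hmono, hanti, fun β hβ => ?_, fun β hβ => ?_⟩
  · rw [hmono.lt_iff_lt_of_strictAntiOn hanti h0 heq hβ]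
    exact ⟨fun h => ⟨hβ.1, h⟩, And.right⟩
  · rw [hanti.lt_iff_lt_of_strictMonoOn hmono h0 heq.symm hβ]
    exact ⟨fun h => ⟨h, hβ.2⟩, And.left⟩

theorem W_deriv_at_a_comparison (q a μp μm : ℝ) (hq : 0 < q) (ha : 0 < a)
    (ρ1m ρ2m ρ1p ρ2p : ℝ)
    (hρ1m : ρ1m = -(μm + Real.sqrt (μm^2 + 2*q)))
    (hρ2m : ρ2m = -μm + Real.sqrt (μm^2 + 2*q))
    (hρ1p : ρ1p = -(μp + Real.sqrt (μp^2 + 2*q)))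
    (hρ2p : ρ2p = -μp + Real.sqrt (μp^2 + 2*q))
    (c₁ c₂ Wam Wap : ℝ → ℝ)
    (hc₁ : ∀ β, c₁ β = ((1+β)*ρ1p - (1-β)*ρ1m) / ((1-β)*(ρ2m - ρ1m)))
    (hc₂ : ∀ β, c₂ β = ((1+β)*ρ2p - (1-β)*ρ2m) / ((1+β)*(ρ2p - ρ1p)))
    (hWam : ∀ β, Wam β = (1 - c₁ β) * (ρ2m * Real.exp (-ρ1m*a) - ρ1m * Real.exp (-ρ2m*a)))
    (hWap : ∀ β, Wap β =
      ρ2p * (c₁ β * Real.exp (-ρ2m*a) + (1 - c₁ β) * Real.exp (-ρ1m*a)) * (1 - c₂ β)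
      - ρ1p * ((1 - c₁ β * c₂ β) * Real.exp (-ρ2m*a)
          - c₂ β * (1 - c₁ β) * Real.exp (-ρ1m*a))) :
    Wam 0 = Wap 0 ∧
    Wam 0 = (ρ2m - ρ1p) / (ρ2m - ρ1m) *
      (ρ2m * Real.exp (-ρ1m*a) - ρ1m * Real.exp (-ρ2m*a)) ∧
    StrictMonoOn Wam (Set.Ioo (-1 : ℝ) 1) ∧
    StrictAntiOn Wap (Set.Ioo (-1 : ℝ) 1) ∧
    (∀ β ∈ Set.Ioo (-1 : ℝ) 1, Wam β < Wap β ↔ β ∈ Set.Ioo (-1 : ℝ) 0) ∧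
    (∀ β ∈ Set.Ioo (-1 : ℝ) 1, Wap β < Wam β ↔ β ∈ Set.Ioo (0 : ℝ) 1) :=
  W_deriv_at_a_comparison_general q a μp μm hq ρ1m ρ2m ρ1p ρ2p hρ1m hρ2m hρ1p hρ2p c₁ c₂ Wam Wap hc₁
    hc₂ hWam hWap
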